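/- For every permutation σ of [n], the number of ending-crossings of σ equals the number of ending-crossings of θ̂(σ). -/

import Mathlib

namespace Paper

variable {n : ℕ}

/-- The 1-based position corresponding to `i : Fin n`. -/
def pv (i : Fin n) : ℕ := (i : ℕ) + 1

/-- The 1-based letter of the word `f` at 1-based position `k` (0 if out of range). -/
def valAt (f : Fin n → Fin n) (k : ℕ) : ℕ :=
  if h : 1 ≤ k ∧ k ≤ n then ((f ⟨k - 1, by omega⟩ : Fin n) : ℕ) + 1 else 0

/-- The map θ̂ : the 1-based `i`-th letter of `hatTheta f` is `σ̂_{n+1-i}`,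
where `σ̂ₐ = n - a` (1-based) if `a < n` and `n̂ = n`. (0-based encoding.) -/
def hatTheta (f : Fin n → Fin n) (i : Fin n) : Fin n :=
  if ((f i.rev : ℕ)) = n - 1 then f i.rev
  else ⟨n - 2 - (f i.rev : ℕ), by have := i.isLt; omega⟩

end Paper

namespace Paper

variable {n : ℕ}

/-- Ending-crossings: pairs (i,j) with i < j ≤ σᵢ < σⱼ = n (1-based). -/
def ecr (f : Fin n → Fin n) : ℕ :=
  (Finset.univ.filter (fun p : Fin n × Fin n =>
    pv p.1 < pv p.2 ∧ pv p.2 ≤ valAt f (pv p.1) ∧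
    valAt f (pv p.1) < valAt f (pv p.2) ∧ valAt f (pv p.2) = n)).card

/-- Upper-crossings: pairs (i,j) with i < j ≤ σᵢ < σⱼ < n (1-based). -/
def ucr (f : Fin n → Fin n) : ℕ :=
  (Finset.univ.filter (fun p : Fin n × Fin n =>
    pv p.1 < pv p.2 ∧ pv p.2 ≤ valAt f (pv p.1) ∧
    valAt f (pv p.1) < valAt f (pv p.2) ∧ valAt f (pv p.2) < n)).card

/-- Lower-crossings: pairs (i,j) with i > j > σᵢ > σⱼ (1-based). -/
def lcr (f : Fin n → Fin n) : ℕ :=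
  (Finset.univ.filter (fun p : Fin n × Fin n =>
    pv p.1 > pv p.2 ∧ pv p.2 > valAt f (pv p.1) ∧
    valAt f (pv p.1) > valAt f (pv p.2))).card

/-- Ending-nestings: pairs (i,j) with i < j ≤ σⱼ < σᵢ = n (1-based). -/
def ene (f : Fin n → Fin n) : ℕ :=
  (Finset.univ.filter (fun p : Fin n × Fin n =>
    pv p.1 < pv p.2 ∧ pv p.2 ≤ valAt f (pv p.2) ∧
    valAt f (pv p.2) < valAt f (pv p.1) ∧ valAt f (pv p.1) = n)).card

/-- Upper-nestings: pairs (i,j) with i < j ≤ σⱼ < σᵢ < n (1-based). -/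
def une (f : Fin n → Fin n) : ℕ :=
  (Finset.univ.filter (fun p : Fin n × Fin n =>
    pv p.1 < pv p.2 ∧ pv p.2 ≤ valAt f (pv p.2) ∧
    valAt f (pv p.2) < valAt f (pv p.1) ∧ valAt f (pv p.1) < n)).card

/-- Lower-nestings: pairs (i,j) with i > j > σⱼ > σᵢ (1-based). -/
def lne (f : Fin n → Fin n) : ℕ :=
  (Finset.univ.filter (fun p : Fin n × Fin n =>
    pv p.1 > pv p.2 ∧ pv p.2 > valAt f (pv p.2) ∧
    valAt f (pv p.2) > valAt f (pv p.1))).card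

/-- Variant ending-nestings: pairs (i,j) with σⱼ < j < i ≤ σᵢ = n (1-based). -/
def etne (f : Fin n → Fin n) : ℕ :=
  (Finset.univ.filter (fun p : Fin n × Fin n =>
    valAt f (pv p.2) < pv p.2 ∧ pv p.2 < pv p.1 ∧
    pv p.1 ≤ valAt f (pv p.1) ∧ valAt f (pv p.1) = n)).card

/-- The crossing number: #{(i,j) : i < j ≤ σᵢ < σⱼ} + #{(i,j) : i > j > σᵢ > σⱼ}. -/
def cros (f : Fin n → Fin n) : ℕ :=
  (Finset.univ.filter (fun p : Fin n × Fin n =>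
    pv p.1 < pv p.2 ∧ pv p.2 ≤ valAt f (pv p.1) ∧
    valAt f (pv p.1) < valAt f (pv p.2))).card
  + lcr f

/-- The nesting number: #{(i,j) : i < j ≤ σⱼ < σᵢ} + #{(i,j) : i > j > σⱼ > σᵢ}. -/
def nest (f : Fin n → Fin n) : ℕ :=
  (Finset.univ.filter (fun p : Fin n × Fin n =>
    pv p.1 < pv p.2 ∧ pv p.2 ≤ valAt f (pv p.2) ∧
    valAt f (pv p.2) < valAt f (pv p.1))).card
  + lne f

end Paper

namespace Paper


lemma valAt_pv (f : Fin n → Fin n) (i : Fin n) : valAt f (pv i) = (f i : ℕ) + 1 := by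
  have hi := i.isLt
  have h1 : 1 ≤ pv i ∧ pv i ≤ n := by simp only [pv]; omega
  have h : (⟨pv i - 1, by omega⟩ : Fin n) = i := Fin.ext (by simp [pv])
  rw [valAt, dif_pos h1, h]

lemma ecr_eq (f : Fin n → Fin n) (hf : Function.Injective f) (t : Fin n)
    (ht : (f t : ℕ) = n - 1) :
    ecr f = (Finset.univ.filter (fun i : Fin n => (i : ℕ) < t ∧ (t : ℕ) ≤ (f i : ℕ))).card := by
  have hn : 0 < n := t.pos
  apply Finset.card_nbij' (fun p => p.1) (fun i => (i, t))
  · intro p hp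
    simp only [Finset.mem_coe, Finset.mem_filter, Finset.mem_univ, true_and, valAt_pv] at hp ⊢
    simp only [pv] at hp
    obtain ⟨h1, h2, h3, h4⟩ := hp
    have hpt : p.2 = t := hf (Fin.ext (by omega))
    subst hpt
    omega
  · intro i hi
    simp only [Finset.mem_coe, Finset.mem_filter, Finset.mem_univ, true_and, valAt_pv] at hi ⊢
    simp only [pv]
    have hne : f i ≠ f t := fun h => by
      have := hf h
      subst this
      omega
    have hlt : (f i : ℕ) < n - 1 := by
      have h2 := (f i).isLt
      rcases Nat.lt_or_ge (f i : ℕ) (n-1) with h | h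
      · exact h
      · exact absurd (Fin.ext (by omega) : f i = f t) hne
    omega
  · intro p hp
    simp only [Finset.mem_coe, Finset.mem_filter, Finset.mem_univ, true_and, valAt_pv] at hp
    simp only [pv] at hp
    have hpt : p.2 = t := hf (Fin.ext (by omega))
    simp [← hpt]
  · intro i _
    simp

lemma core_count (σ : Equiv.Perm (Fin n)) (t : Fin n) (ht : (t : ℕ) ≤ (σ t : ℕ)) :
    (Finset.univ.filter (fun i : Fin n => (i : ℕ) < t ∧ (t : ℕ) ≤ (σ i : ℕ))).card
    = (Finset.univ.filter (fun i : Fin n => (t : ℕ) < i ∧ (σ i : ℕ) < t)).card := by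
  classical
  have h1 := Finset.card_filter_add_card_filter_not
    (s := Finset.univ.filter (fun i : Fin n => (i : ℕ) < (t : ℕ)))
    (p := fun i : Fin n => (σ i : ℕ) < (t : ℕ))
  have h2 := Finset.card_filter_add_card_filter_not
    (s := Finset.univ.filter (fun i : Fin n => (σ i : ℕ) < (t : ℕ)))
    (p := fun i : Fin n => (i : ℕ) < (t : ℕ))
  have hb : (Finset.univ.filter (fun i : Fin n => (σ i : ℕ) < t)).card
      = (Finset.univ.filter (fun i : Fin n => (i : ℕ) < t)).card := by
    apply Finset.card_bij (fun i _ => σ i)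
    · intro a ha; simp only [Finset.mem_filter, Finset.mem_univ, true_and] at ha ⊢; exact ha
    · intro a _ b _ h; exact σ.injective h
    · intro b hb
      refine ⟨σ.symm b, ?_, by simp⟩
      simp only [Finset.mem_filter, Finset.mem_univ, true_and] at hb ⊢
      simpa using hb
  rw [Finset.filter_filter, Finset.filter_filter] at h1 h2
  have e1 : (Finset.univ.filter (fun i : Fin n => (i : ℕ) < (t : ℕ) ∧ ¬ (σ i : ℕ) < (t : ℕ)))
      = (Finset.univ.filter (fun i : Fin n => (i : ℕ) < t ∧ (t : ℕ) ≤ (σ i : ℕ))) := by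
    apply Finset.filter_congr; intro i _
    constructor <;> (intro h; exact ⟨h.1, by omega⟩)
  have e2 : (Finset.univ.filter (fun i : Fin n => (σ i : ℕ) < (t : ℕ) ∧ ¬ (i : ℕ) < (t : ℕ)))
      = (Finset.univ.filter (fun i : Fin n => (t : ℕ) < i ∧ (σ i : ℕ) < t)) := by
    apply Finset.filter_congr; intro i _
    constructor
    · rintro ⟨hs, hi⟩
      refine ⟨?_, hs⟩
      rcases Nat.lt_or_ge (t : ℕ) (i : ℕ) with h | h
      · exact h
      · exfalso
        have hit : i = t := Fin.ext (by omega)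
        subst hit; omega
    · rintro ⟨hi, hs⟩; exact ⟨hs, by omega⟩
  have e3 : (Finset.univ.filter (fun i : Fin n => (σ i : ℕ) < (t : ℕ) ∧ (i : ℕ) < (t : ℕ)))
      = (Finset.univ.filter (fun i : Fin n => (i : ℕ) < (t : ℕ) ∧ (σ i : ℕ) < (t : ℕ))) := by
    apply Finset.filter_congr; intro i _; tauto
  rw [e1] at h1
  rw [e2, e3] at h2
  omega

lemma hatTheta_val (f : Fin n → Fin n) (i : Fin n) :
    ((hatTheta f i : Fin n) : ℕ) = if (f i.rev : ℕ) = n - 1 then n - 1 else n - 2 - (f i.rev : ℕ) := by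
  rw [hatTheta]
  split <;> simp [*]

lemma hatTheta_inj (f : Fin n → Fin n) (hf : Function.Injective f) :
    Function.Injective (hatTheta f) := by
  intro a b h
  have ha := (f a.rev).isLt
  have hb := (f b.rev).isLt
  have hv : ((hatTheta f a : Fin n) : ℕ) = ((hatTheta f b : Fin n) : ℕ) := congrArg _ h
  rw [hatTheta_val, hatTheta_val] at hv
  have hab : (f a.rev : ℕ) = (f b.rev : ℕ) := by
    by_cases h1 : (f a.rev : ℕ) = n - 1 <;> by_cases h2 : (f b.rev : ℕ) = n - 1 <;>
      simp only [h1, h2, if_pos, if_neg, if_true, if_false] at hv <;> omega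
  exact Fin.rev_injective (hf (Fin.ext hab))

lemma bridge_count (σ : Equiv.Perm (Fin n)) (t : Fin n) (ht : (σ t : ℕ) = n - 1) :
    (Finset.univ.filter (fun i : Fin n =>
        (i : ℕ) < (t.rev : ℕ) ∧ (t.rev : ℕ) ≤ ((hatTheta ⇑σ i : Fin n) : ℕ))).card
    = (Finset.univ.filter (fun i : Fin n => (t : ℕ) < i ∧ (σ i : ℕ) < t)).card := by
  have htn := t.isLt
  apply Finset.card_nbij' Fin.rev Fin.rev
  · intro i hi
    simp only [Finset.mem_coe, Finset.mem_filter, Finset.mem_univ, true_and] at hi ⊢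
    obtain ⟨h1, h2⟩ := hi
    rw [hatTheta_val] at h2
    rw [Fin.val_rev] at h1 ⊢
    have hin := i.isLt
    have hs := (σ i.rev).isLt
    have hne : (σ i.rev : ℕ) ≠ n - 1 := by
      intro hc
      have h3 : i.rev = t := σ.injective (Fin.ext (by omega))
      have h4 : i = t.rev := by rw [← h3, Fin.rev_rev]
      subst h4
      simp [Fin.val_rev] at h1
    rw [if_neg hne, Fin.val_rev] at h2
    constructor
    · omega
    · omega
  · intro j hj
    simp only [Finset.mem_coe, Finset.mem_filter, Finset.mem_univ, true_and] at hj ⊢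
    obtain ⟨h1, h2⟩ := hj
    have hjn := j.isLt
    rw [Fin.val_rev, hatTheta_val, Fin.rev_rev]
    have hne : (σ j : ℕ) ≠ n - 1 := by omega
    rw [if_neg hne, Fin.val_rev]
    omega
  · intro i _; exact Fin.rev_rev i
  · intro j _; exact Fin.rev_rev j

/-- θ̂ preserves the ending-crossing number. -/
theorem ecr_hatTheta (n : ℕ) (σ : Equiv.Perm (Fin n)) :
    ecr ⇑σ = ecr (hatTheta ⇑σ) := by
  rcases Nat.eq_zero_or_pos n with hn | hn
  · subst hn
    simp [ecr]
  · set t : Fin n := σ.symm ⟨n - 1, by omega⟩ with htdef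
    have ht : (σ t : ℕ) = n - 1 := by simp [htdef]
    have h2 : ((hatTheta ⇑σ t.rev : Fin n) : ℕ) = n - 1 := by
      rw [hatTheta_val, Fin.rev_rev, if_pos ht]
    rw [ecr_eq ⇑σ σ.injective t ht,
        ecr_eq (hatTheta ⇑σ) (hatTheta_inj ⇑σ σ.injective) t.rev h2,
        bridge_count σ t ht, core_count σ t (by have := t.isLt; omega)]


end Paper
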